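/- arXiv:1503.08402 — 2 statements merged into one kernel-verified Lean document; each statement's English description precedes it below -/
import Mathlib

section
/- For every locally compact topological group G, the space Sub_G of closed subgroups of G, equipped with the Chabauty topology, is compact. -/
/-- The type of closed subgroups of a topological group `G`. -/
def ClosedSubgroups (G : Type*) [Group G] [TopologicalSpace G] : Type _ :=
  {H : Subgroup G // IsClosed (H : Set G)}

/-- The Chabauty topology on the space of closed subgroups of `G`, generated by the sets
`O₁(U) = {H : H ∩ U ≠ ∅}` for `U` open and `O₂(K) = {H : H ∩ K = ∅}` for `K` compact. -/
instance chabauty (G : Type*) [Group G] [TopologicalSpace G] :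
    TopologicalSpace (ClosedSubgroups G) :=
  TopologicalSpace.generateFrom
    ({S | ∃ U : Set G, IsOpen U ∧ S = {H : ClosedSubgroups G | ((H.1 : Set G) ∩ U).Nonempty}} ∪
     {S | ∃ K : Set G, IsCompact K ∧ S = {H : ClosedSubgroups G | (H.1 : Set G) ∩ K = ∅}})

open Filter Set TopologicalSpace Topology

/-- The limit subgroup of an ultrafilter on the Chabauty space. -/
def chabautyLimit {G : Type*} [Group G] [TopologicalSpace G] [IsTopologicalGroup G]
    (F : Ultrafilter (ClosedSubgroups G)) : Subgroup G where
  carrier := {g | ∀ U : Set G, IsOpen U → g ∈ U →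
    {H : ClosedSubgroups G | ((H.1 : Set G) ∩ U).Nonempty} ∈ F}
  one_mem' := fun U _ h1 => Filter.mem_of_superset Filter.univ_mem
      (fun H _ => ⟨1, H.1.one_mem, h1⟩)
  inv_mem' := by
    intro g hg U hU hgU
    have hV : IsOpen ((fun x : G => x⁻¹) ⁻¹' U) := hU.preimage continuous_inv
    have hgV : g ∈ (fun x : G => x⁻¹) ⁻¹' U := by simpa using hgU
    refine Filter.mem_of_superset (hg _ hV hgV) ?_
    rintro H ⟨v, hvH, hvV⟩
    exact ⟨v⁻¹, H.1.inv_mem hvH, hvV⟩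
  mul_mem' := by
    intro a b ha hb U hU habU
    have hpre : IsOpen ((fun p : G × G => p.1 * p.2) ⁻¹' U) := hU.preimage continuous_mul
    obtain ⟨V, W, hV, hW, haV, hbW, hsub⟩ := isOpen_prod_iff.mp hpre a b habU
    refine Filter.mem_of_superset (Filter.inter_mem (ha V hV haV) (hb W hW hbW)) ?_
    rintro H ⟨⟨v, hvH, hvV⟩, ⟨w, hwH, hwW⟩⟩
    exact ⟨v * w, H.1.mul_mem hvH hwH, hsub (Set.mk_mem_prod hvV hwW)⟩

theorem chabautyLimit_isClosed {G : Type*} [Group G] [TopologicalSpace G] [IsTopologicalGroup G]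
    (F : Ultrafilter (ClosedSubgroups G)) : IsClosed ((chabautyLimit F : Subgroup G) : Set G) := by
  rw [← isOpen_compl_iff, isOpen_iff_forall_mem_open]
  intro g hg
  have : ¬ ∀ U : Set G, IsOpen U → g ∈ U →
      {H : ClosedSubgroups G | ((H.1 : Set G) ∩ U).Nonempty} ∈ F := hg
  push_neg at this
  obtain ⟨U, hU, hgU, hUF⟩ := this
  refine ⟨U, fun x hx hxL => hUF (hxL U hU hx), hU, hgU⟩

/-- For every locally compact group `G`, the Chabauty space of closed subgroups of `G`
is compact. -/
theorem chabauty_compactSpace (G : Type*) [Group G] [TopologicalSpace G] [IsTopologicalGroup G]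
    [LocallyCompactSpace G] : CompactSpace (ClosedSubgroups G) := by
  rw [← isCompact_univ_iff, isCompact_iff_ultrafilter_le_nhds]
  intro F _
  set L : Subgroup G := chabautyLimit F with hL
  refine ⟨⟨L, chabautyLimit_isClosed F⟩, Set.mem_univ _, ?_⟩
  set H₀ : ClosedSubgroups G := ⟨L, chabautyLimit_isClosed F⟩
  have hnhds : 𝓝 H₀ = ⨅ s ∈ {s | H₀ ∈ s ∧ s ∈
      ({S | ∃ U : Set G, IsOpen U ∧ S = {H : ClosedSubgroups G | ((H.1 : Set G) ∩ U).Nonempty}} ∪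
       {S | ∃ K : Set G, IsCompact K ∧ S = {H : ClosedSubgroups G | (H.1 : Set G) ∩ K = ∅}})},
      𝓟 s := nhds_generateFrom
  rw [hnhds, le_iInf₂_iff]
  rintro s ⟨hH₀s, hs | hs⟩ <;> rw [Filter.le_principal_iff]
  · -- O₁ case
    obtain ⟨U, hU, rfl⟩ := hs
    obtain ⟨g, hgL, hgU⟩ := hH₀s
    exact hgL U hU hgU
  · -- O₂ case
    obtain ⟨K, hK, rfl⟩ := hs
    have hLK : (L : Set G) ∩ K = ∅ := hH₀s
    -- for each k ∈ K, pick an open set witnessing k ∉ L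
    have hchoice : ∀ k : K, ∃ U : Set G, IsOpen U ∧ (k : G) ∈ U ∧
        {H : ClosedSubgroups G | ((H.1 : Set G) ∩ U).Nonempty} ∉ F := by
      rintro ⟨k, hk⟩
      have hkL : k ∉ (L : Set G) := fun h => by
        have : k ∈ (L : Set G) ∩ K := ⟨h, hk⟩
        simp [hLK] at this
      by_contra hcon
      push_neg at hcon
      exact hkL (fun U hU hkU => hcon U hU hkU)
    choose U hUo hUm hUF using hchoice
    have hcover : K ⊆ ⋃ k : K, U k := fun x hx => Set.mem_iUnion.2 ⟨⟨x, hx⟩, hUm ⟨x, hx⟩⟩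
    obtain ⟨t, ht⟩ := hK.elim_finite_subcover U hUo hcover
    have hmem : (⋂ k ∈ t, {H : ClosedSubgroups G | ((H.1 : Set G) ∩ U k).Nonempty}ᶜ) ∈ F := by
      exact (Filter.biInter_finset_mem t).mpr
        (fun k _ => Ultrafilter.compl_mem_iff_notMem.2 (hUF k))
    refine Filter.mem_of_superset hmem ?_
    intro H hH
    simp only [Set.mem_iInter, Set.mem_compl_iff, Set.mem_setOf_eq] at hH
    ext x
    simp only [Set.mem_inter_iff, Set.mem_empty_iff_false, iff_false, not_and]
    intro hxH hxK
    obtain ⟨_, ⟨k, rfl⟩, hk⟩ := ht hxK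
    obtain ⟨_, ⟨hkt, rfl⟩, hxU⟩ := hk
    exact hH k hkt ⟨x, hxH, hxU⟩
end

section
/- The Chabauty space of closed subgroups of ℝ is homeomorphic to the closed interval [0, ∞] (the one-point compactification of [0,∞)). Concretely, the map sending α ∈ (0,∞) to the subgroup αℤ, 0 to ℝ, and ∞ to {0}, is a homeomorphism onto Sub_ℝ. -/
open Filter Topology
open scoped ENNReal NNReal

/-- The type of closed additive subgroups of a topological additive group `G`. -/
def ClosedAddSubgroups (G : Type*) [AddGroup G] [TopologicalSpace G] : Type _ :=
  {H : AddSubgroup G // IsClosed (H : Set G)}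

/-- The Chabauty topology on the space of closed additive subgroups of `G`. -/
instance addChabauty (G : Type*) [AddGroup G] [TopologicalSpace G] :
    TopologicalSpace (ClosedAddSubgroups G) :=
  TopologicalSpace.generateFrom
    ({S | ∃ U : Set G, IsOpen U ∧ S = {H : ClosedAddSubgroups G | ((H.1 : Set G) ∩ U).Nonempty}} ∪
     {S | ∃ K : Set G, IsCompact K ∧ S = {H : ClosedAddSubgroups G | (H.1 : Set G) ∩ K = ∅}})

namespace ChabautyAux

open Set Metric AddSubgroup

noncomputable def sub (t : ℝ≥0∞) : AddSubgroup ℝ :=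
  if t = 0 then ⊤ else AddSubgroup.zmultiples t.toReal

lemma sub_closed (t : ℝ≥0∞) : IsClosed ((sub t : AddSubgroup ℝ) : Set ℝ) := by
  unfold sub; split
  · simpa using isClosed_univ
  · exact AddSubgroup.isClosed_of_discrete

noncomputable def F (t : ℝ≥0∞) : ClosedAddSubgroups ℝ := ⟨sub t, sub_closed t⟩

lemma sub_zero : sub 0 = ⊤ := if_pos rfl

lemma sub_zero' {t : ℝ≥0∞} (ht : t = 0) : sub t = ⊤ := if_pos ht

lemma sub_of_ne {t : ℝ≥0∞} (ht : t ≠ 0) : sub t = zmultiples t.toReal := if_neg ht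

lemma sub_top : sub ⊤ = ⊥ := by
  rw [sub_of_ne (by simp)]; simp [AddSubgroup.zmultiples_zero_eq_bot]

lemma mul_toReal_mem_sub (n : ℤ) (t : ℝ≥0∞) : (n : ℝ) * t.toReal ∈ sub t := by
  unfold sub; split
  · trivial
  · exact mem_zmultiples_iff.mpr ⟨n, by rw [zsmul_eq_mul]⟩

lemma zmultiples_ne_top (c : ℝ) : zmultiples c ≠ ⊤ := by
  intro h
  rcases eq_or_ne c 0 with rfl | hc
  · rw [AddSubgroup.zmultiples_zero_eq_bot] at h
    have : (1 : ℝ) ∈ (⊥ : AddSubgroup ℝ) := by rw [h]; trivial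
    simpa using this
  · have hm : c / 2 ∈ zmultiples c := by rw [h]; trivial
    obtain ⟨k, hk⟩ := mem_zmultiples_iff.mp hm
    rw [zsmul_eq_mul] at hk
    have h2 : (2 * k : ℤ) = (1 : ℤ) := by
      have h0 : c * (2 * (k:ℝ) - 1) = 0 := by push_cast at hk ⊢; nlinarith [hk]
      rcases mul_eq_zero.mp h0 with h | h
      · exact absurd h hc
      · have : (2 * (k:ℝ)) = 1 := by linarith
        exact_mod_cast this
    omega

lemma zmultiples_inj {a b : ℝ} (ha : 0 ≤ a) (hb : 0 ≤ b)
    (h : zmultiples a = zmultiples b) : a = b := by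
  have h1 : a ∈ zmultiples b := h ▸ mem_zmultiples a
  have h2 : b ∈ zmultiples a := h.symm ▸ mem_zmultiples b
  obtain ⟨k, hk⟩ := mem_zmultiples_iff.mp h1
  obtain ⟨m, hm⟩ := mem_zmultiples_iff.mp h2
  rw [zsmul_eq_mul] at hk hm
  rcases eq_or_lt_of_le hb with rfl | hb'
  · linarith [hk]
  · have hmk : (m * k : ℤ) = 1 := by
      have h3 : ((m * k : ℤ) : ℝ) * b = 1 * b := by
        push_cast
        rw [mul_assoc, hk, hm, one_mul]
      have := mul_right_cancel₀ (ne_of_gt hb') h3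
      exact_mod_cast this
    rcases Int.mul_eq_one_iff_eq_one_or_neg_one.mp hmk with ⟨hm1, hk1⟩ | ⟨hm1, hk1⟩
    · rw [hk1] at hk; simpa using hk.symm
    · rw [hk1] at hk; push_cast at hk; linarith


lemma F_inj : Function.Injective F := by
  intro s t h
  have hsub : sub s = sub t := congrArg Subtype.val h
  by_cases hs : s = 0 <;> by_cases ht : t = 0
  · rw [hs, ht]
  · rw [sub_zero' hs, sub_of_ne ht] at hsub
    exact absurd hsub.symm (zmultiples_ne_top _)
  · rw [sub_of_ne hs, sub_zero' ht] at hsub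
    exact absurd hsub (zmultiples_ne_top _)
  · rw [sub_of_ne hs, sub_of_ne ht] at hsub
    have hr : s.toReal = t.toReal :=
      zmultiples_inj ENNReal.toReal_nonneg ENNReal.toReal_nonneg hsub
    by_cases hs' : s = ⊤ <;> by_cases ht' : t = ⊤
    · rw [hs', ht']
    · rw [hs'] at hr
      simp only [ENNReal.toReal_top] at hr
      rcases ENNReal.toReal_eq_zero_iff t |>.mp hr.symm with h0 | h0
      · exact absurd h0 ht
      · exact absurd h0 ht'
    · rw [ht'] at hr
      simp only [ENNReal.toReal_top] at hr
      rcases ENNReal.toReal_eq_zero_iff s |>.mp hr with h0 | h0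
      · exact absurd h0 hs
      · exact absurd h0 hs'
    · exact (ENNReal.toReal_eq_toReal_iff' hs' ht').mp hr

lemma zmultiples_neg' (a : ℝ) : zmultiples (-a) = zmultiples a := by
  ext x
  simp only [mem_zmultiples_iff]
  constructor
  · rintro ⟨k, rfl⟩; exact ⟨-k, by push_cast [zsmul_eq_mul]; ring⟩
  · rintro ⟨k, rfl⟩; exact ⟨-k, by push_cast [zsmul_eq_mul]; ring⟩

lemma F_surj : Function.Surjective F := by
  rintro ⟨H, hH⟩
  rcases AddSubgroup.dense_or_cyclic H with hd | ⟨a, rfl⟩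
  · refine ⟨0, Subtype.ext ?_⟩
    have hu : (H : Set ℝ) = Set.univ := by
      rw [← hH.closure_eq]; exact hd.closure_eq
    have hHt : H = ⊤ := SetLike.ext' (by rw [hu]; rfl)
    show sub 0 = H
    rw [hHt]; exact sub_zero
  · have hz : AddSubgroup.closure ({a} : Set ℝ) = zmultiples a := by
      ext x
      rw [AddSubgroup.mem_closure_singleton, mem_zmultiples_iff]
    rcases lt_trichotomy a 0 with ha | rfl | ha
    · refine ⟨ENNReal.ofReal (-a), Subtype.ext ?_⟩
      show sub _ = AddSubgroup.closure ({a} : Set ℝ)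
      rw [sub_of_ne (ENNReal.ofReal_pos.mpr (by linarith)).ne',
        ENNReal.toReal_ofReal (by linarith), hz, zmultiples_neg']
    · refine ⟨⊤, Subtype.ext ?_⟩
      show sub ⊤ = AddSubgroup.closure ({0} : Set ℝ)
      rw [sub_top, hz, AddSubgroup.zmultiples_zero_eq_bot]
    · refine ⟨ENNReal.ofReal a, Subtype.ext ?_⟩
      show sub _ = AddSubgroup.closure ({a} : Set ℝ)
      rw [sub_of_ne (ENNReal.ofReal_pos.mpr ha).ne',
        ENNReal.toReal_ofReal ha.le, hz]

lemma isOpen_gen_open {U : Set ℝ} (hU : IsOpen U) :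
    IsOpen {H : ClosedAddSubgroups ℝ | ((H.1 : Set ℝ) ∩ U).Nonempty} :=
  TopologicalSpace.isOpen_generateFrom_of_mem (Or.inl ⟨U, hU, rfl⟩)

lemma isOpen_gen_compact {K : Set ℝ} (hK : IsCompact K) :
    IsOpen {H : ClosedAddSubgroups ℝ | (H.1 : Set ℝ) ∩ K = ∅} :=
  TopologicalSpace.isOpen_generateFrom_of_mem (Or.inr ⟨K, hK, rfl⟩)

lemma sep {H K : ClosedAddSubgroups ℝ} {x : ℝ} (hxH : x ∈ H.1) (hxK : x ∉ K.1) :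
    ∃ V W : Set (ClosedAddSubgroups ℝ),
      IsOpen V ∧ IsOpen W ∧ H ∈ V ∧ K ∈ W ∧ Disjoint V W := by
  obtain ⟨ε, hε, hball⟩ := Metric.isOpen_iff.mp K.2.isOpen_compl x hxK
  refine ⟨{L | ((L.1 : Set ℝ) ∩ ball x (ε / 2)).Nonempty},
    {L | (L.1 : Set ℝ) ∩ closedBall x (ε / 2) = ∅},
    isOpen_gen_open isOpen_ball, isOpen_gen_compact (isCompact_closedBall _ _), ?_, ?_, ?_⟩
  · exact ⟨x, hxH, mem_ball_self (by linarith)⟩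
  · ext y
    simp only [Set.mem_inter_iff, Set.mem_empty_iff_false, iff_false, not_and]
    intro hy hyb
    exact hball (lt_of_le_of_lt (mem_closedBall.mp hyb) (by linarith)) hy
  · rw [Set.disjoint_left]
    rintro L ⟨y, hy1, hy2⟩ hLW
    have hmem : y ∈ (L.1 : Set ℝ) ∩ closedBall x (ε / 2) :=
      ⟨hy1, ball_subset_closedBall hy2⟩
    exact Set.eq_empty_iff_forall_notMem.mp hLW y hmem

instance : T2Space (ClosedAddSubgroups ℝ) := by
  constructor
  intro H K hne
  have hne' : (H.1 : Set ℝ) ≠ (K.1 : Set ℝ) := by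
    intro h
    exact hne (Subtype.ext (SetLike.ext' h))
  by_cases hsub : (H.1 : Set ℝ) ⊆ (K.1 : Set ℝ)
  · obtain ⟨x, hxK, hxH⟩ :=
      Set.not_subset.mp (fun h => hne' (Set.Subset.antisymm hsub h))
    obtain ⟨V, W, hV, hW, hKV, hHW, hd⟩ := sep hxK hxH
    exact ⟨W, V, hW, hV, hHW, hKV, hd.symm⟩
  · obtain ⟨x, hxH, hxK⟩ := Set.not_subset.mp hsub
    obtain ⟨V, W, hV, hW, hHV, hKW, hd⟩ := sep hxH hxK
    exact ⟨V, W, hV, hW, hHV, hKW, hd⟩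

lemma F_cont : Continuous F := by
  apply continuous_generateFrom_iff.mpr
  rintro S (⟨U, hU, rfl⟩ | ⟨K, hK, rfl⟩)
  · -- open-set generator
    by_cases h0 : (0 : ℝ) ∈ U
    · have huniv : F ⁻¹' {H : ClosedAddSubgroups ℝ | ((H.1 : Set ℝ) ∩ U).Nonempty}
          = Set.univ := by
        ext t
        simp only [Set.mem_preimage, Set.mem_setOf_eq, Set.mem_univ, iff_true]
        exact ⟨0, AddSubgroup.zero_mem _, h0⟩
      rw [huniv]; exact isOpen_univ
    · rw [isOpen_iff_mem_nhds]
      intro t ht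
      simp only [Set.mem_preimage, Set.mem_setOf_eq] at ht
      by_cases hst : t = 0
      · subst hst
        obtain ⟨u, _, huU⟩ := ht
        obtain ⟨ε, hε, hball⟩ := Metric.isOpen_iff.mp hU u huU
        refine Filter.mem_of_superset
          (Iio_mem_nhds (ENNReal.ofReal_pos.mpr hε)) ?_
        intro s hs
        simp only [Set.mem_Iio] at hs
        simp only [Set.mem_preimage, Set.mem_setOf_eq]
        by_cases hs0 : s = 0
        · subst hs0
          exact ⟨u, by rw [show (F 0).1 = ⊤ from sub_zero]; trivial, huU⟩
        · have hsfin : s ≠ ⊤ := ne_top_of_lt hs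
          have hα : 0 < s.toReal := ENNReal.toReal_pos hs0 hsfin
          have hαε : s.toReal < ε := (ENNReal.lt_ofReal_iff_toReal_lt hsfin).mp hs
          set n : ℤ := round (u / s.toReal) with hn
          refine ⟨(n : ℝ) * s.toReal, mul_toReal_mem_sub n s, hball ?_⟩
          rw [mem_ball, Real.dist_eq]
          have h1 : (n : ℝ) * s.toReal - u = ((n : ℝ) - u / s.toReal) * s.toReal := by
            field_simp
          rw [h1, abs_mul, abs_of_pos hα]
          have h2 : |(n : ℝ) - u / s.toReal| ≤ 1 / 2 := by
            rw [abs_sub_comm]; exact abs_sub_round _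
          calc |(n : ℝ) - u / s.toReal| * s.toReal ≤ (1 / 2) * s.toReal :=
                mul_le_mul_of_nonneg_right h2 hα.le
            _ < ε := by linarith
      · obtain ⟨x, hxS, hxU⟩ := ht
        have hxsub : x ∈ sub t := hxS
        rw [sub_of_ne hst] at hxsub
        obtain ⟨k, hk⟩ := AddSubgroup.mem_zmultiples_iff.mp hxsub
        rw [zsmul_eq_mul] at hk
        have htfin : t ≠ ⊤ := by
          rintro rfl
          rw [ENNReal.toReal_top, mul_zero] at hk
          exact h0 (by rwa [← hk] at hxU)
        have hcont : ContinuousAt (fun s : ℝ≥0∞ => (k : ℝ) * s.toReal) t :=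
          continuousAt_const.mul (ENNReal.continuousAt_toReal htfin)
        have hmem : (fun s : ℝ≥0∞ => (k : ℝ) * s.toReal) ⁻¹' U ∈ 𝓝 t :=
          hcont.preimage_mem_nhds (hU.mem_nhds (by rw [hk]; exact hxU))
        refine Filter.mem_of_superset hmem ?_
        intro s hsU
        exact ⟨(k : ℝ) * s.toReal, mul_toReal_mem_sub k s, hsU⟩
  · -- compact-set generator
    by_cases hK0 : (0 : ℝ) ∈ K
    · have hempty : F ⁻¹' {H : ClosedAddSubgroups ℝ | (H.1 : Set ℝ) ∩ K = ∅} = ∅ := by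
        ext t
        simp only [Set.mem_preimage, Set.mem_setOf_eq, Set.mem_empty_iff_false, iff_false]
        intro h
        exact Set.eq_empty_iff_forall_notMem.mp h 0 ⟨AddSubgroup.zero_mem _, hK0⟩
      rw [hempty]; exact isOpen_empty
    by_cases hKe : K = ∅
    · subst hKe
      have huniv : F ⁻¹' {H : ClosedAddSubgroups ℝ | (H.1 : Set ℝ) ∩ (∅ : Set ℝ) = ∅}
          = Set.univ := by
        ext t; simp [Set.inter_empty]
      rw [huniv]; exact isOpen_univ
    rw [isOpen_iff_mem_nhds]
    intro t ht
    simp only [Set.mem_preimage, Set.mem_setOf_eq] at ht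
    obtain ⟨r, hr⟩ := (Metric.isBounded_iff_subset_closedBall 0).mp hK.isBounded
    set M : ℝ := max r 0 + 1 with hM
    have hM1 : 1 ≤ M := by
      have := le_max_right r 0; simp only [hM]; linarith
    have hKM : ∀ x ∈ K, |x| ≤ M := by
      intro x hx
      have := hr hx
      rw [Metric.mem_closedBall, Real.dist_eq, _root_.sub_zero] at this
      have h2 := le_max_left r 0
      simp only [hM]; linarith
    have ht0 : t ≠ 0 := by
      rintro rfl
      have h1 : ((F 0).1 : Set ℝ) = Set.univ := by
        show ((sub 0 : AddSubgroup ℝ) : Set ℝ) = Set.univ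
        rw [sub_zero]; rfl
      rw [h1, Set.univ_inter] at ht
      exact hKe ht
    have key : ∀ β : ℝ, M < β ∨ β = 0 →
        ((AddSubgroup.zmultiples β : AddSubgroup ℝ) : Set ℝ) ∩ K = ∅ := by
      intro β hβ
      apply Set.eq_empty_iff_forall_notMem.mpr
      rintro x ⟨hx1, hx2⟩
      obtain ⟨k, rfl⟩ := AddSubgroup.mem_zmultiples_iff.mp hx1
      rw [zsmul_eq_mul] at hx2
      rcases hβ with hβ | rfl
      · rcases eq_or_ne k 0 with rfl | hk
        · simp only [Int.cast_zero, zero_mul] at hx2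
          exact hK0 hx2
        · have h1 : (1 : ℝ) ≤ |(k : ℝ)| := by exact_mod_cast Int.one_le_abs hk
          have h2 := hKM _ hx2
          rw [abs_mul, abs_of_pos (by linarith : (0:ℝ) < β)] at h2
          nlinarith
      · simp only [mul_zero] at hx2
        exact hK0 hx2
    by_cases htop : t = ⊤
    · subst htop
      refine Filter.mem_of_superset (Ioi_mem_nhds (ENNReal.ofReal_lt_top (r := M))) ?_
      intro s hs
      simp only [Set.mem_Ioi] at hs
      have hs0 : s ≠ 0 := by
        rintro rfl
        exact (ENNReal.ofReal_pos.mpr (by linarith : (0:ℝ) < M)).asymm hs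
      show ((sub s : AddSubgroup ℝ) : Set ℝ) ∩ K = ∅
      rw [sub_of_ne hs0]
      by_cases hstop : s = ⊤
      · subst hstop
        exact key _ (Or.inr ENNReal.toReal_top)
      · exact key _ (Or.inl
          ((ENNReal.ofReal_lt_iff_lt_toReal (by linarith) hstop).mp hs))
    · -- t finite positive
      have hα : 0 < t.toReal := ENNReal.toReal_pos ht0 htop
      rw [show ((F t).1 : Set ℝ) = ((AddSubgroup.zmultiples t.toReal : AddSubgroup ℝ) : Set ℝ)
        from congrArg _ (sub_of_ne ht0)] at ht
      have hCc : IsClosed ((AddSubgroup.zmultiples t.toReal : AddSubgroup ℝ) : Set ℝ) :=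
        AddSubgroup.isClosed_of_discrete
      have hsubKC : K ⊆ (((AddSubgroup.zmultiples t.toReal : AddSubgroup ℝ) : Set ℝ))ᶜ := by
        intro x hx hxC
        exact Set.eq_empty_iff_forall_notMem.mp ht x ⟨hxC, hx⟩
      obtain ⟨δ, hδ, hthick⟩ := hK.exists_thickening_subset_open hCc.isOpen_compl hsubKC
      set α : ℝ := t.toReal with hαdef
      have hη0 : 0 < min (α / 2) (δ * α / (4 * M)) := by
        apply lt_min (by linarith)
        exact div_pos (mul_pos hδ hα) (by linarith)
      set η : ℝ := min (α / 2) (δ * α / (4 * M)) with hηdef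
      have hηα : η ≤ α / 2 := min_le_left _ _
      have hηδ : η ≤ δ * α / (4 * M) := min_le_right _ _
      have hmemV : Set.Ioo (ENNReal.ofReal (α - η)) (ENNReal.ofReal (α + η)) ∈ 𝓝 t := by
        apply Ioo_mem_nhds
        · rw [ENNReal.ofReal_lt_iff_lt_toReal (by linarith) htop]
          linarith
        · rw [ENNReal.lt_ofReal_iff_toReal_lt htop]
          linarith
      refine Filter.mem_of_superset hmemV ?_
      rintro s ⟨hs1, hs2⟩
      have hstop : s ≠ ⊤ := ne_top_of_lt hs2
      have hβ1 : α - η < s.toReal :=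
        (ENNReal.ofReal_lt_iff_lt_toReal (by linarith) hstop).mp hs1
      have hβ2 : s.toReal < α + η := (ENNReal.lt_ofReal_iff_toReal_lt hstop).mp hs2
      have hβpos : 0 < s.toReal := by linarith
      have hs0 : s ≠ 0 := by
        rintro rfl
        simp only [ENNReal.toReal_zero] at hβpos
        exact lt_irrefl 0 hβpos
      show ((sub s : AddSubgroup ℝ) : Set ℝ) ∩ K = ∅
      rw [sub_of_ne hs0]
      apply Set.eq_empty_iff_forall_notMem.mpr
      rintro x ⟨hx1, hx2⟩
      obtain ⟨k, rfl⟩ := AddSubgroup.mem_zmultiples_iff.mp hx1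
      rw [zsmul_eq_mul] at hx2
      have hxM : |(k : ℝ)| * s.toReal ≤ M := by
        have := hKM _ hx2
        rwa [abs_mul, abs_of_pos hβpos] at this
      have hkα : |(k : ℝ)| * α ≤ 2 * M := by
        nlinarith [abs_nonneg ((k : ℝ))]
      have hclose : dist ((k : ℝ) * α) ((k : ℝ) * s.toReal) < δ := by
        rw [Real.dist_eq, ← mul_sub, abs_mul]
        have hab : |α - s.toReal| < η := by
          rw [abs_sub_lt_iff]; constructor <;> linarith
        calc |(k : ℝ)| * |α - s.toReal| ≤ |(k : ℝ)| * η :=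
              mul_le_mul_of_nonneg_left hab.le (abs_nonneg _)
          _ ≤ |(k : ℝ)| * (δ * α / (4 * M)) :=
              mul_le_mul_of_nonneg_left hηδ (abs_nonneg _)
          _ < δ := by
              rw [div_eq_mul_inv, ← mul_assoc]
              have hM0 : (0 : ℝ) < 4 * M := by linarith
              have h1 : |(k : ℝ)| * (δ * α) ≤ 2 * M * δ := by nlinarith [abs_nonneg ((k:ℝ))]
              have h2 : (2 * M * δ) * (4 * M)⁻¹ < δ := by
                rw [mul_inv_lt_iff₀ hM0]; nlinarith
              calc |(k : ℝ)| * (δ * α) * (4 * M)⁻¹ ≤ (2 * M * δ) * (4 * M)⁻¹ :=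
                    mul_le_mul_of_nonneg_right h1 (by positivity)
                _ < δ := h2
      have hmemth : (k : ℝ) * α ∈ Metric.thickening δ K :=
        Metric.mem_thickening_iff.mpr ⟨(k : ℝ) * s.toReal, hx2, hclose⟩
      exact hthick hmemth (AddSubgroup.mem_zmultiples_iff.mpr ⟨k, by rw [zsmul_eq_mul]⟩)

noncomputable def FEquiv : ℝ≥0∞ ≃ ClosedAddSubgroups ℝ := Equiv.ofBijective F ⟨F_inj, F_surj⟩

end ChabautyAux


/-- The Chabauty space of closed subgroups of `ℝ` is homeomorphic to `[0, ∞]` (realized as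
`ℝ≥0∞`): the map sending `α ∈ (0, ∞)` to `αℤ`, `0` to `ℝ`, and `∞` to `{0}` is a
homeomorphism onto `Sub_ℝ`. -/
theorem chabauty_real_homeomorph_ennreal :
    ∃ e : Homeomorph ℝ≥0∞ (ClosedAddSubgroups ℝ),
      (e 0).1 = (⊤ : AddSubgroup ℝ) ∧
      (e ⊤).1 = (⊥ : AddSubgroup ℝ) ∧
      ∀ α : ℝ≥0, 0 < α → (e (α : ℝ≥0∞)).1 = AddSubgroup.zmultiples (α : ℝ) := by
  refine ⟨Continuous.homeoOfEquivCompactToT2 (f := ChabautyAux.FEquiv) ChabautyAux.F_cont,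
    ?_, ?_, ?_⟩
  · exact ChabautyAux.sub_zero
  · exact ChabautyAux.sub_top
  · intro α hα
    show ChabautyAux.sub (α : ℝ≥0∞) = AddSubgroup.zmultiples (α : ℝ)
    rw [ChabautyAux.sub_of_ne (ENNReal.coe_ne_zero.mpr hα.ne'), ENNReal.coe_toReal]
end
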